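/- arXiv:1604.00215 — 6 statements merged into one kernel-verified Lean document; each statement's English description precedes it below -/
import Mathlib

section
/- Let n ≥ 1, 1 ≤ r ≤ n+1, and fix a = (a_0,...,a_{r+1}) with 1 = a_0 ≤ a_1 < a_2 < ... < a_r ≤ a_{r+1} = n+1. Suppose b = (b_0,...,b_{r+1}) satisfies 1 = b_0 ≤ b_1 ≤ ... ≤ b_{r+1} = n+1, and for every j ∈ {0,...,r} and every k with a_j ≤ k < a_{j+1}, both (k+1-b_{j+1})(n+1) - k ≤ 0 and (k+1-b_j)(n+1) - k ≥ 0 hold. Then b = a. Moreover, when b = a all these inequalities are strict. -/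
/-- Uniqueness lemma for numerical supports: if `b` is weakly increasing with endpoints
`1` and `n+1` and satisfies all the inequalities `(k+1-b_{j+1})(n+1)-k ≤ 0` and
`(k+1-b_j)(n+1)-k ≥ 0` for `a_j ≤ k < a_{j+1}`, then `b = a`; moreover for `b = a` all
these inequalities are strict. -/
theorem stmt_1 (n r : ℕ) (hn : 1 ≤ n) (hr1 : 1 ≤ r) (hr2 : r ≤ n + 1)
    (a b : ℕ → ℤ)
    (ha0 : a 0 = 1) (haLast : a (r + 1) = (n : ℤ) + 1)
    (ha01 : a 0 ≤ a 1) (haStrict : ∀ i, 1 ≤ i → i < r → a i < a (i + 1))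
    (haEnd : a r ≤ a (r + 1))
    (hb0 : b 0 = 1) (hbLast : b (r + 1) = (n : ℤ) + 1)
    (hbMono : ∀ i, i ≤ r → b i ≤ b (i + 1))
    (h : ∀ j, j ≤ r → ∀ k : ℤ, a j ≤ k → k < a (j + 1) →
      (k + 1 - b (j + 1)) * ((n : ℤ) + 1) - k ≤ 0 ∧
      0 ≤ (k + 1 - b j) * ((n : ℤ) + 1) - k) :
    (∀ i, i ≤ r + 1 → b i = a i) ∧
    (∀ j, j ≤ r → ∀ k : ℤ, a j ≤ k → k < a (j + 1) →
      (k + 1 - a (j + 1)) * ((n : ℤ) + 1) - k < 0 ∧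
      0 < (k + 1 - a j) * ((n : ℤ) + 1) - k) := by
  have aMono : ∀ i, i ≤ r → a i ≤ a (i + 1) := by
    intro i hi
    rcases Nat.eq_or_lt_of_le hi with h' | h'
    · subst h'; exact haEnd
    · rcases Nat.eq_zero_or_pos i with h0 | h0
      · subst h0; exact ha01
      · exact le_of_lt (haStrict i h0 h')
  have aMono' : ∀ j i : ℕ, i ≤ j → j ≤ r + 1 → a i ≤ a j := by
    intro j
    induction j with
    | zero =>
      intro i hij _
      obtain rfl : i = 0 := Nat.le_zero.mp hij
      exact le_refl _
    | succ m ih =>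
      intro i hij hj
      rcases Nat.eq_or_lt_of_le hij with h' | h'
      · subst h'; exact le_refl _
      · exact le_trans (ih i (by omega) (by omega)) (aMono m (by omega))
  have ha_ge1 : ∀ i, i ≤ r + 1 → 1 ≤ a i := by
    intro i hi
    have := aMono' i 0 (Nat.zero_le _) hi
    omega
  have ha_le : ∀ i, i ≤ r + 1 → a i ≤ (n : ℤ) + 1 := by
    intro i hi
    have := aMono' (r + 1) i hi (le_refl _)
    omega
  have lower : ∀ j, j ≤ r → a j < a (j + 1) → a (j + 1) ≤ b (j + 1) := by
    intro j hj hlt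
    obtain ⟨h1, _⟩ := h j hj (a (j + 1) - 1) (by linarith) (by linarith)
    by_contra hc
    push_neg at hc
    have hd : (1 : ℤ) ≤ a (j + 1) - b (j + 1) := by linarith
    have hnn : (0 : ℤ) ≤ (n : ℤ) + 1 := by positivity
    have := mul_le_mul_of_nonneg_right hd hnn
    have hle : a (j + 1) ≤ (n : ℤ) + 1 := ha_le (j + 1) (by omega)
    nlinarith
  have upper : ∀ j, j ≤ r → a j < a (j + 1) → b j ≤ a j := by
    intro j hj hlt
    obtain ⟨_, h2⟩ := h j hj (a j) (le_refl _) hlt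
    by_contra hc
    push_neg at hc
    have hd : a j + 1 - b j ≤ 0 := by linarith
    have hnn : (0 : ℤ) ≤ (n : ℤ) + 1 := by positivity
    have := mul_nonpos_of_nonpos_of_nonneg hd hnn
    have hge : (1 : ℤ) ≤ a j := ha_ge1 j (by omega)
    linarith
  constructor
  · intro i hi
    match i, hi with
    | 0, _ => rw [hb0, ha0]
    | (i + 1), hi =>
      have hi' : i + 1 ≤ r + 1 := hi
      -- lower bound
      have hlow : a (i + 1) ≤ b (i + 1) := by
        rcases Nat.eq_or_lt_of_le hi' with h' | h'
        · have : i + 1 = r + 1 := h'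
          rw [this, hbLast, haLast]
        · have hir : i ≤ r := by omega
          by_cases hlt : a i < a (i + 1)
          · exact lower i hir hlt
          · have heq : a i = a (i + 1) := le_antisymm (aMono i hir) (by linarith)
            have hi0 : i = 0 := by
              by_contra h0
              exact absurd (haStrict i (by omega) (by omega)) (by simp [heq])
            subst hi0
            have := hbMono 0 (by omega)
            rw [hb0] at this
            rw [← heq, ha0]
            exact this
      have hup : b (i + 1) ≤ a (i + 1) := by
        rcases Nat.eq_or_lt_of_le hi' with h' | h'
        · have : i + 1 = r + 1 := h'
          rw [this, hbLast, haLast]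
        · have hir : i + 1 ≤ r := by omega
          by_cases hlt : a (i + 1) < a (i + 1 + 1)
          · exact upper (i + 1) hir hlt
          · have heq : a (i + 1) = a (i + 1 + 1) :=
              le_antisymm (aMono (i + 1) hir) (by linarith)
            have hir' : i + 1 = r := by
              by_contra h0
              exact absurd (haStrict (i + 1) (by omega) (by omega)) (by simp [heq])
            have := hbMono (i + 1) hir
            rw [hir'] at this heq ⊢
            rw [hbLast] at this
            rw [heq, haLast]
            exact this
      exact le_antisymm hup hlow
  · intro j hj k hk1 hk2
    have h1 : (1 : ℤ) ≤ a j := ha_ge1 j (by omega)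
    have h2 : a (j + 1) ≤ (n : ℤ) + 1 := ha_le (j + 1) (by omega)
    have hnn : (0 : ℤ) ≤ (n : ℤ) + 1 := by positivity
    constructor
    · have hd : k + 1 - a (j + 1) ≤ 0 := by linarith
      have := mul_nonpos_of_nonpos_of_nonneg hd hnn
      linarith
    · have hd : (1 : ℤ) ≤ k + 1 - a j := by linarith
      have := mul_le_mul_of_nonneg_right hd hnn
      linarith
end

section
/- Fix n ≥ 1, 1 ≤ r ≤ n+1, and a with 1 = a_0 ≤ a_1 < ... < a_r ≤ a_{r+1} = n+1. Define, for k ∈ {1,...,n}, s ∈ ℤ^n, and i ∈ {0,...,r}: ω_k(e_i, s) = -k·s_k if 1 ≤ k < a_i; ω_k(e_i, s) = ((n+1)/2 - k)·s_k + ((n+1)/2)·|s_k| if a_i ≤ k < a_{i+1}; ω_k(e_i, s) = (n+1-k)·s_k if a_{i+1} ≤ k ≤ n. Extend linearly: ω_k(v, s) = Σ_i v_i·ω_k(e_i, s) for v ∈ V. Then for any weakly increasing b with b_0 = 1, b_{r+1} = n+1, any j and any k with a_j ≤ k < a_{j+1}: if s_k ≥ 0 then ω_k(v_b, s) = -|s_k|·((k+1-b_{j+1})(n+1)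 - k), and if s_k ≤ 0 then ω_k(v_b, s) = |s_k|·((k+1-b_j)(n+1) - k), where v_b = (b_1-b_0, ..., b_{r+1}-b_r). -/
/-- The weight `ω_k(e_i, s)`: `-k·s_k` for `k < a_i`, the (integer-valued) middle
expression `((n+1)/2 - k)s_k + ((n+1)/2)|s_k| = max((n+1-k)s_k, -k·s_k)` for
`a_i ≤ k < a_{i+1}`, and `(n+1-k)s_k` for `k ≥ a_{i+1}`. -/
def omegaE (n : ℕ) (a : ℕ → ℤ) (s : ℕ → ℤ) (i k : ℕ) : ℤ :=
  if (k : ℤ) < a i then -(k : ℤ) * s k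
  else if (k : ℤ) < a (i + 1) then max (((n : ℤ) + 1 - k) * s k) (-(k : ℤ) * s k)
  else ((n : ℤ) + 1 - k) * s k

/-- Linear extension `ω_k(v, s) = Σ_i v_i ω_k(e_i, s)`. -/
def omegaV (n r : ℕ) (a : ℕ → ℤ) (s : ℕ → ℤ) (v : ℕ → ℤ) (k : ℕ) : ℤ :=
  ∑ i ∈ Finset.range (r + 1), v i * omegaE n a s i k

open Finset

/-!
For `a_j ≤ k < a_{j+1}` and `a` monotone, `ω_k(e_i, s)` is `(n+1-k)s_k` for `i < j`, the maximum
`max((n+1-k)s_k, -k·s_k)` for `i = j`, and `-k·s_k` for `i > j`. Against these three constant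
blocks the coefficients `b_{i+1} - b_i` of `v_b` telescope, so `ω_k(v_b, s)` is
`(b_j - 1)(n+1-k)s_k + (b_{j+1} - b_j)·max + (n+1-b_{j+1})(-k·s_k)`; the sign of `s_k` decides
which side the maximum takes.
-/

lemma monotoneOn_Iic_of_le_succ {α : Type*} [Preorder α] {f : ℕ → α} {m : ℕ}
    (h : ∀ i < m, f i ≤ f (i + 1)) : MonotoneOn f (Set.Iic m) :=
  monotoneOn_of_le_succ Set.ordConnected_Iic fun i _ _ hi =>
    h i (Order.succ_le_iff.mp hi)

lemma sum_range_sub_mul_eq_of_const {R : Type*} [CommRing R] (b w : ℕ → R) {j r : ℕ}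
    (hj : j ≤ r) {A B : R} (hlt : ∀ i < j, w i = A) (hgt : ∀ i, j < i → i ≤ r → w i = B) :
    ∑ i ∈ range (r + 1), (b (i + 1) - b i) * w i =
      (b j - b 0) * A + (b (j + 1) - b j) * w j + (b (r + 1) - b (j + 1)) * B := by
  have hbelow : ∑ i ∈ range j, (b (i + 1) - b i) * w i = (b j - b 0) * A := by
    rw [sum_congr rfl fun i hi => by rw [hlt i (mem_range.mp hi)], ← sum_mul, sum_range_sub]
  have habove : ∑ i ∈ Ico (j + 1) (r + 1), (b (i + 1) - b i) * w i =
      (b (r + 1) - b (j + 1)) * B := by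
    rw [sum_congr rfl fun i hi => by
        rw [hgt i (mem_Ico.mp hi).1 (Nat.lt_succ_iff.mp (mem_Ico.mp hi).2)],
      ← sum_mul, sum_Ico_sub _ (by omega)]
  rw [← sum_range_add_sum_Ico _ (by omega : j + 1 ≤ r + 1), sum_range_succ, hbelow, habove]

section Weights

variable {n : ℕ} {a s : ℕ → ℤ} {i k : ℕ}

lemma omegaE_of_lt (h : (k : ℤ) < a i) : omegaE n a s i k = -(k : ℤ) * s k := by
  rw [omegaE, if_pos h]

lemma omegaE_of_mem (h₁ : a i ≤ k) (h₂ : (k : ℤ) < a (i + 1)) :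
    omegaE n a s i k = max (((n : ℤ) + 1 - k) * s k) (-(k : ℤ) * s k) := by
  rw [omegaE, if_neg h₁.not_gt, if_pos h₂]

lemma omegaE_of_le (h₁ : a i ≤ k) (h₂ : a (i + 1) ≤ k) :
    omegaE n a s i k = ((n : ℤ) + 1 - k) * s k := by
  rw [omegaE, if_neg h₁.not_gt, if_neg h₂.not_gt]

lemma omegaV_sub_eq {r j : ℕ} (b : ℕ → ℤ) (ha : MonotoneOn a (Set.Iic (r + 1))) (hj : j ≤ r)
    (hka : a j ≤ k) (hka' : (k : ℤ) < a (j + 1)) :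
    omegaV n r a s (fun i => b (i + 1) - b i) k =
      (b j - b 0) * (((n : ℤ) + 1 - k) * s k)
        + (b (j + 1) - b j) * max (((n : ℤ) + 1 - k) * s k) (-(k : ℤ) * s k)
        + (b (r + 1) - b (j + 1)) * (-(k : ℤ) * s k) := by
  have hIic : ∀ p ≤ r + 1, p ∈ Set.Iic (r + 1) := fun _ => Set.mem_Iic.2
  rw [omegaV, sum_range_sub_mul_eq_of_const b _ hj, omegaE_of_mem hka hka']
  · intro i hi
    have hsucc : a (i + 1) ≤ k := (ha (hIic _ (by omega)) (hIic _ (by omega)) hi).trans hka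
    exact omegaE_of_le ((ha (hIic _ (by omega)) (hIic _ (by omega)) i.le_succ).trans hsucc) hsucc
  · intro i hi hir
    exact omegaE_of_lt (hka'.trans_le (ha (hIic _ (by omega)) (hIic _ (by omega)) hi))

end Weights

theorem stmt_4_general (n r : ℕ)
    (a b : ℕ → ℤ) (s : ℕ → ℤ)
    (ha01 : a 0 ≤ a 1) (haStrict : ∀ i, 1 ≤ i → i < r → a i < a (i + 1))
    (haEnd : a r ≤ a (r + 1))
    (hb0 : b 0 = 1) (hbLast : b (r + 1) = (n : ℤ) + 1)
    (j : ℕ) (hj : j ≤ r) (k : ℕ)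
    (hka : a j ≤ (k : ℤ)) (hka' : (k : ℤ) < a (j + 1)) :
    (0 ≤ s k → omegaV n r a s (fun i => b (i + 1) - b i) k =
      -|s k| * (((k : ℤ) + 1 - b (j + 1)) * ((n : ℤ) + 1) - k)) ∧
    (s k ≤ 0 → omegaV n r a s (fun i => b (i + 1) - b i) k =
      |s k| * (((k : ℤ) + 1 - b j) * ((n : ℤ) + 1) - k)) := by
  have hstep : ∀ i < r + 1, a i ≤ a (i + 1) := by
    intro i hi
    rcases Nat.eq_zero_or_pos i with rfl | hi0
    · exact ha01
    rcases (Nat.lt_succ_iff.mp hi).lt_or_eq with hir | rfl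
    · exact (haStrict i hi0 hir).le
    · exact haEnd
  rw [omegaV_sub_eq b (monotoneOn_Iic_of_le_succ hstep) hj hka hka', hb0, hbLast]
  constructor
  · intro hs
    rw [max_eq_left (by nlinarith [Int.natCast_nonneg n]), abs_of_nonneg hs]
    ring
  · intro hs
    rw [max_eq_right (by nlinarith [Int.natCast_nonneg n]), abs_of_nonpos hs]
    ring

/-- For `b` weakly increasing with endpoints `1, n+1`, `a_j ≤ k < a_{j+1}`:
if `s_k ≥ 0` then `ω_k(v_b, s) = -|s_k|((k+1-b_{j+1})(n+1) - k)`, and if `s_k ≤ 0`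
then `ω_k(v_b, s) = |s_k|((k+1-b_j)(n+1) - k)`. -/
theorem stmt_4 (n r : ℕ) (hn : 1 ≤ n) (hr1 : 1 ≤ r) (hr2 : r ≤ n + 1)
    (a b : ℕ → ℤ) (s : ℕ → ℤ)
    (ha0 : a 0 = 1) (haLast : a (r + 1) = (n : ℤ) + 1)
    (ha01 : a 0 ≤ a 1) (haStrict : ∀ i, 1 ≤ i → i < r → a i < a (i + 1))
    (haEnd : a r ≤ a (r + 1))
    (hb0 : b 0 = 1) (hbLast : b (r + 1) = (n : ℤ) + 1)
    (hbMono : ∀ i, i ≤ r → b i ≤ b (i + 1))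
    (j : ℕ) (hj : j ≤ r) (k : ℕ) (hk1 : 1 ≤ k) (hk2 : k ≤ n)
    (hka : a j ≤ (k : ℤ)) (hka' : (k : ℤ) < a (j + 1)) :
    (0 ≤ s k → omegaV n r a s (fun i => b (i + 1) - b i) k =
      -|s k| * (((k : ℤ) + 1 - b (j + 1)) * ((n : ℤ) + 1) - k)) ∧
    (s k ≤ 0 → omegaV n r a s (fun i => b (i + 1) - b i) k =
      |s k| * (((k : ℤ) + 1 - b j) * ((n : ℤ) + 1) - k)) :=
  stmt_4_general n r a b s ha01 haStrict haEnd hb0 hbLast j hj k hka hka'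
end

section
/- With the weight function ω_k as defined for a fixed tuple a (with strictly increasing interior entries a_1 < ... < a_r), for every s ∈ ℤ^n and every k ∈ {1,...,n}, ω_k(v_a, s) ≥ 0, with equality if and only if s_k = 0. Consequently ω(v_a, s) = Σ_{k=1}^n ω_k(v_a, s) > 0 for every nonzero s ∈ ℤ^n. -/
set_option maxHeartbeats 1000000 in
/-- For the distinguished tuple `a`: `ω_k(v_a, s) ≥ 0` with equality iff `s_k = 0`;
hence `ω(v_a, s) = Σ_k ω_k(v_a, s) > 0` for every nonzero `s`. -/
theorem stmt_5 (n r : ℕ) (hn : 1 ≤ n) (hr1 : 1 ≤ r) (hr2 : r ≤ n + 1)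
    (a : ℕ → ℤ) (s : ℕ → ℤ)
    (ha0 : a 0 = 1) (haLast : a (r + 1) = (n : ℤ) + 1)
    (ha01 : a 0 ≤ a 1) (haStrict : ∀ i, 1 ≤ i → i < r → a i < a (i + 1))
    (haEnd : a r ≤ a (r + 1)) :
    (∀ k, 1 ≤ k → k ≤ n →
      0 ≤ omegaV n r a s (fun i => a (i + 1) - a i) k ∧
      (omegaV n r a s (fun i => a (i + 1) - a i) k = 0 ↔ s k = 0)) ∧
    ((∃ k, 1 ≤ k ∧ k ≤ n ∧ s k ≠ 0) →
      0 < ∑ k ∈ Finset.Icc 1 n, omegaV n r a s (fun i => a (i + 1) - a i) k) := by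
  have hstep : ∀ i, i ≤ r → a i ≤ a (i + 1) := by
    intro i hi
    rcases Nat.eq_zero_or_pos i with h0 | h1
    · subst h0; exact ha01
    rcases eq_or_lt_of_le hi with h | h
    · subst h; exact haEnd
    · exact (haStrict i h1 h).le
  have amono : ∀ j, j ≤ r + 1 → ∀ i, i ≤ j → a i ≤ a j := by
    intro j
    induction j with
    | zero => intro _ i hi; rw [Nat.le_zero.mp hi]
    | succ m ih =>
      intro hm i hi
      rcases eq_or_lt_of_le hi with h | h
      · rw [h]
      · exact le_trans (ih (by omega) i (by omega)) (hstep m (by omega))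
  have key : ∀ k : ℕ, 1 ≤ k → k ≤ n →
      ∃ C : ℤ, C ≠ 0 ∧
        omegaV n r a s (fun i => a (i + 1) - a i) k = C * s k ∧ 0 ≤ C * s k := by
    intro k hk1 hk2
    have hk1' : (1:ℤ) ≤ (k:ℤ) := by exact_mod_cast hk1
    have hk2' : (k:ℤ) ≤ n := by exact_mod_cast hk2
    set S := (Finset.range (r + 2)).filter (fun i => a i ≤ (k:ℤ)) with hS
    have h0S : 0 ∈ S := by
      simp only [hS, Finset.mem_filter, Finset.mem_range, ha0]
      exact ⟨by omega, hk1'⟩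
    have hne : S.Nonempty := ⟨0, h0S⟩
    set j := S.max' hne with hj
    have hjS : j ∈ S := S.max'_mem hne
    have hjr1 : j ≤ r + 1 := by
      have := Finset.mem_range.mp (Finset.mem_filter.mp hjS).1; omega
    have hajk : a j ≤ (k:ℤ) := (Finset.mem_filter.mp hjS).2
    have hjr : j ≤ r := by
      rcases eq_or_lt_of_le hjr1 with h | h
      · exfalso; rw [h, haLast] at hajk; omega
      · omega
    have hkj1 : (k:ℤ) < a (j + 1) := by
      by_contra hcon
      push_neg at hcon
      have hmem : j + 1 ∈ S :=
        Finset.mem_filter.mpr ⟨Finset.mem_range.mpr (by omega), hcon⟩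
      have := Finset.le_max' S (j+1) hmem
      omega
    have hsum : omegaV n r a s (fun i => a (i + 1) - a i) k
        = (a j - 1) * (((n:ℤ) + 1 - k) * s k)
          + (a (j+1) - a j) * max (((n:ℤ) + 1 - k) * s k) (-(k:ℤ) * s k)
          + ((n:ℤ) + 1 - a (j+1)) * (-(k:ℤ) * s k) := by
      rw [omegaV]
      have hrj : r + 1 = (j + 1) + (r - j) := by omega
      rw [hrj, Finset.sum_range_add, Finset.sum_range_succ]
      have h1 : ∑ i ∈ Finset.range j,
          (fun i => a (i + 1) - a i) i * omegaE n a s i k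
          = (a j - a 0) * (((n:ℤ) + 1 - k) * s k) := by
        have hc : ∀ i ∈ Finset.range j,
            (fun i => a (i + 1) - a i) i * omegaE n a s i k
            = (a (i+1) - a i) * (((n:ℤ) + 1 - k) * s k) := by
          intro i hi
          have hi' := Finset.mem_range.mp hi
          have hle : a (i+1) ≤ (k:ℤ) :=
            le_trans (amono j (by omega) (i+1) (by omega)) hajk
          have hle0 : a i ≤ (k:ℤ) := le_trans (hstep i (by omega)) hle
          simp [omegaE, not_lt.mpr hle, not_lt.mpr hle0]
        rw [Finset.sum_congr rfl hc, ← Finset.sum_mul, Finset.sum_range_sub a j]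
      have h2 : omegaE n a s j k
          = max (((n:ℤ) + 1 - k) * s k) (-(k:ℤ) * s k) := by
        simp only [omegaE, if_neg (not_lt.mpr hajk), if_pos hkj1]
      have h3 : ∑ x ∈ Finset.range (r - j),
          (fun i => a (i + 1) - a i) (j + 1 + x) * omegaE n a s (j + 1 + x) k
          = (a (r+1) - a (j+1)) * (-(k:ℤ) * s k) := by
        have hc : ∀ x ∈ Finset.range (r - j),
            (fun i => a (i + 1) - a i) (j + 1 + x) * omegaE n a s (j + 1 + x) k
            = ((fun x => a (j + 1 + x)) (x+1) - (fun x => a (j + 1 + x)) x)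
                * (-(k:ℤ) * s k) := by
          intro x hx
          have hx' := Finset.mem_range.mp hx
          have hgt : (k:ℤ) < a (j + 1 + x) :=
            lt_of_lt_of_le hkj1 (amono (j + 1 + x) (by omega) (j+1) (by omega))
          simp only [omegaE, if_pos hgt]
          have hxx : j + 1 + (x + 1) = j + 1 + x + 1 := by omega
          rw [hxx]
        rw [Finset.sum_congr rfl hc, ← Finset.sum_mul,
          Finset.sum_range_sub (fun x => a (j + 1 + x)) (r - j)]
        have hrr : j + 1 + (r - j) = r + 1 := by omega
        simp only [hrr, Nat.add_zero]
      rw [h1, h2, h3, ha0, haLast]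
    rcases le_or_gt 0 (s k) with hs | hs
    · have hmax : max (((n:ℤ) + 1 - k) * s k) (-(k:ℤ) * s k)
          = ((n:ℤ) + 1 - k) * s k := by
        apply max_eq_left; nlinarith
      refine ⟨(a (j+1) - 1 - k) * ((n:ℤ) + 1) + k, ?_, ?_, ?_⟩
      · have : (0:ℤ) ≤ (a (j+1) - 1 - k) * ((n:ℤ) + 1) := by nlinarith
        intro h; linarith
      · rw [hsum, hmax]; ring
      · have : (0:ℤ) ≤ (a (j+1) - 1 - k) * ((n:ℤ) + 1) := by nlinarith
        have hC : (0:ℤ) ≤ (a (j+1) - 1 - k) * ((n:ℤ) + 1) + k := by linarith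
        exact mul_nonneg hC hs
    · have hmax : max (((n:ℤ) + 1 - k) * s k) (-(k:ℤ) * s k)
          = -(k:ℤ) * s k := by
        apply max_eq_right; nlinarith
      refine ⟨(a j - 1 - k) * ((n:ℤ) + 1) + k, ?_, ?_, ?_⟩
      · have : (a j - 1 - k) * ((n:ℤ) + 1) ≤ -((n:ℤ) + 1) := by nlinarith
        intro h; linarith
      · rw [hsum, hmax]; ring
      · have : (a j - 1 - k) * ((n:ℤ) + 1) ≤ -((n:ℤ) + 1) := by nlinarith
        have hC : (a j - 1 - k) * ((n:ℤ) + 1) + k ≤ 0 := by linarith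
        nlinarith [mul_nonneg (neg_nonneg.mpr hC) (neg_nonneg.mpr hs.le)]
  constructor
  · intro k hk1 hk2
    obtain ⟨C, hC0, hEq, hPos⟩ := key k hk1 hk2
    refine ⟨by rw [hEq]; exact hPos, ?_⟩
    rw [hEq]
    constructor
    · intro h
      rcases mul_eq_zero.mp h with h | h
      · exact absurd h hC0
      · exact h
    · intro h; rw [h, mul_zero]
  · rintro ⟨k, hk1, hk2, hsk⟩
    apply Finset.sum_pos'
    · intro i hi
      obtain ⟨C, _, hEq, hPos⟩ := key i (Finset.mem_Icc.mp hi).1 (Finset.mem_Icc.mp hi).2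
      rw [hEq]; exact hPos
    · refine ⟨k, Finset.mem_Icc.mpr ⟨hk1, hk2⟩, ?_⟩
      obtain ⟨C, hC0, hEq, hPos⟩ := key k hk1 hk2
      rw [hEq]
      refine lt_of_le_of_ne hPos fun h => hsk ?_
      rcases mul_eq_zero.mp h.symm with h' | h'
      · exact absurd h' hC0
      · exact h'
end

section
/- Suppose a ≠ b are two tuples in B (weakly increasing integer tuples of length r+2 with endpoints 1 and n+1, with a having strictly increasing interior entries a_1 < ... < a_r). Then there exists an index j ∈ {0,...,r} and an integer k with a_j ≤ k < a_{j+1} such that either (k+1-b_{j+1})(n+1) - k > 0 or (k+1-b_j)(n+1) - k < 0. -/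
/-- Contrapositive of the uniqueness lemma: if `b ≠ a`, then some index `j` and some
integer `k` with `a_j ≤ k < a_{j+1}` violate one of the two inequalities. -/
theorem stmt_13 (n r : ℕ) (hn : 1 ≤ n) (hr1 : 1 ≤ r) (hr2 : r ≤ n + 1)
    (a b : ℕ → ℤ)
    (ha0 : a 0 = 1) (haLast : a (r + 1) = (n : ℤ) + 1)
    (ha01 : a 0 ≤ a 1) (haStrict : ∀ i, 1 ≤ i → i < r → a i < a (i + 1))
    (haEnd : a r ≤ a (r + 1))
    (hb0 : b 0 = 1) (hbLast : b (r + 1) = (n : ℤ) + 1)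
    (hbMono : ∀ i, i ≤ r → b i ≤ b (i + 1))
    (hne : ∃ i, i ≤ r + 1 ∧ b i ≠ a i) :
    ∃ j, j ≤ r ∧ ∃ k : ℤ, a j ≤ k ∧ k < a (j + 1) ∧
      (0 < (k + 1 - b (j + 1)) * ((n : ℤ) + 1) - k ∨
       (k + 1 - b j) * ((n : ℤ) + 1) - k < 0) := by
  classical
  have hstep : ∀ i, i ≤ r → a i ≤ a (i + 1) := by
    intro i hi
    rcases Nat.eq_zero_or_pos i with h0 | h1
    · subst h0; exact ha01
    · rcases eq_or_lt_of_le hi with h | h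
      · subst h; exact haEnd
      · exact (haStrict i h1 h).le
  have amono : ∀ j, j ≤ r + 1 → ∀ i, i ≤ j → a i ≤ a j := by
    intro j
    induction j with
    | zero => intro _ i hi; interval_cases i; exact le_refl _
    | succ m ih =>
      intro hj i hi
      rcases Nat.eq_or_lt_of_le hi with h | h
      · subst h; exact le_refl _
      · exact le_trans (ih (by omega) i (by omega)) (hstep m (by omega))
  obtain ⟨i, hi, hmin'⟩ : ∃ i, (i ≤ r + 1 ∧ b i ≠ a i) ∧
      ∀ m, m < i → ¬(m ≤ r + 1 ∧ b m ≠ a m) :=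
    ⟨Nat.find hne, Nat.find_spec hne, fun m hm => Nat.find_min hne hm⟩
  have hmin : ∀ m, m < i → m ≤ r + 1 → b m = a m := by
    intro m hm hmr
    have := hmin' m hm
    push_neg at this
    exact this hmr
  have hi0 : i ≠ 0 := by
    intro h; exact hi.2 (by rw [h, hb0, ha0])
  have hir : i ≤ r := by
    rcases Nat.lt_or_ge i (r + 1) with h | h
    · omega
    · exfalso
      have hieq : i = r + 1 := le_antisymm hi.1 h
      exact hi.2 (by rw [hieq, hbLast, haLast])
  have ha1 : (1 : ℤ) ≤ a i := by
    have := amono i (by omega) 0 (by omega)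
    omega
  have haiN : a i ≤ (n : ℤ) + 1 := by
    have := amono (r + 1) (le_refl _) i (by omega)
    omega
  rcases lt_or_gt_of_ne hi.2 with hlt | hgt
  · -- b i < a i : use j = i - 1, k = a i - 1
    obtain ⟨m, rfl⟩ : ∃ m, i = m + 1 := ⟨i - 1, by omega⟩
    refine ⟨m, by omega, a (m + 1) - 1, ?_, by omega, ?_⟩
    · -- a m < a (m+1)
      rcases Nat.eq_zero_or_pos m with h0 | h1
      · subst h0
        have hb01 := hbMono 0 (by omega)
        rw [hb0] at hb01
        rw [ha0]
        omega
      · have := haStrict m h1 (by omega)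
        omega
    · left
      have h1 : (1 : ℤ) ≤ a (m + 1) - b (m + 1) := by omega
      have h2 : (0 : ℤ) ≤ (n : ℤ) + 1 := by positivity
      nlinarith [mul_le_mul_of_nonneg_right h1 h2]
  · -- b i > a i : use j = i, k = a i
    refine ⟨i, hir, a i, le_refl _, ?_, ?_⟩
    · -- a i < a (i + 1)
      rcases Nat.lt_or_ge i r with h | h
      · exact haStrict i (by omega) h
      · have hieq : i = r := le_antisymm hir h
        -- a r < n + 1 since a r < b r ≤ b (r+1) = n+1
        have hbr : b r ≤ b (r + 1) := hbMono r (le_refl _)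
        rw [hbLast] at hbr
        rw [hieq] at hgt ⊢
        rw [haLast]
        omega
    · right
      have h1 : a i + 1 - b i ≤ 0 := by omega
      have h2 : (0 : ℤ) ≤ (n : ℤ) + 1 := by positivity
      have := mul_nonpos_of_nonpos_of_nonneg h1 h2
      omega
end

section
/- In the local model, for each k from 1 to n+1, the variety X[n] ⊂ (X ×_{𝔸¹} 𝔸^{n+1}) × (ℙ¹)^n cut out by the equations u_1 x = v_1 t_1, u_i v_{i-1} = v_i u_{i-1} t_i (1 < i ≤ n), v_n y = u_n t_{n+1} is covered by the n+1 open sets W_k = {u_i ≠ 0 for i < k, v_i ≠ 0 for i ≥ k}; i.e., every point of X[n] lies in some W_k. Equivalently: for any point of X[n], setting (u_0:v_0) = (1:x) and (u_{n+1}:v_{n+1}) = (y:1), there is an index k such that u_i ≠ 0 for all i < k and v_i ≠ 0 for all i ≥ k. -/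
/-- In the local model, every point of `X[n]` lies in one of the charts `W_k`:
given the equations `uᵢ vᵢ₋₁ = vᵢ uᵢ₋₁ tᵢ` (with `(u₀:v₀) = (1:x)` and
`(u_{n+1}:v_{n+1}) = (y:1)`), `xy = t₁⋯t_{n+1}`, and no `(uᵢ, vᵢ) = (0,0)`, there is
some `k` with `1 ≤ k ≤ n+1` such that `uᵢ ≠ 0` for all `i < k` and `vᵢ ≠ 0` for all
`i ≥ k`. -/
theorem stmt_17 (K : Type*) [Field K] (n : ℕ)
    (x y : K) (t : ℕ → K) (u v : ℕ → K)
    (hu0 : u 0 = 1) (hv0 : v 0 = x) (hun : u (n + 1) = y) (hvn : v (n + 1) = 1)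
    (heq : ∀ i, 1 ≤ i → i ≤ n + 1 → u i * v (i - 1) = v i * u (i - 1) * t i)
    (hxy : x * y = ∏ i ∈ Finset.Icc 1 (n + 1), t i)
    (hnd : ∀ i ≤ n + 1, ¬(u i = 0 ∧ v i = 0)) :
    ∃ m, 1 ≤ m ∧ m ≤ n + 1 ∧ (∀ i < m, u i ≠ 0) ∧
      ∀ i, m ≤ i → i ≤ n + 1 → v i ≠ 0 := by
  classical
  -- zeros of v propagate backwards
  have hback : ∀ j, j ≤ n + 1 → v j = 0 → ∀ i ≤ j, v i = 0 := by
    intro j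
    induction j with
    | zero =>
      intro _ h0 i hi
      interval_cases i
      exact h0
    | succ j ih =>
      intro hj hvj i hi
      have huj : u (j + 1) ≠ 0 := by
        intro h
        exact hnd (j + 1) hj ⟨h, hvj⟩
      have he := heq (j + 1) (Nat.le_add_left 1 j) hj
      simp only [Nat.add_sub_cancel] at he
      rw [hvj] at he
      have hz : u (j + 1) * v j = 0 := by rw [he]; ring
      have hvj' : v j = 0 := (mul_eq_zero.mp hz).resolve_left huj
      rcases Nat.lt_succ_iff_lt_or_eq.mp (Nat.lt_succ_of_le hi) with h | h
      · exact ih (Nat.le_of_succ_le hj) hvj' i (by omega)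
      · rw [h]; exact hvj
  by_cases hall : ∀ i, 1 ≤ i → i ≤ n + 1 → v i ≠ 0
  · exact ⟨1, le_refl 1, Nat.le_add_left 1 n, by
      intro i hi; interval_cases i; rw [hu0]; exact one_ne_zero, hall⟩
  · push_neg at hall
    obtain ⟨j, hj1, hj2, hvj⟩ := hall
    -- take the greatest such j
    set S := (Finset.Icc 1 (n + 1)).filter (fun i => v i = 0) with hS
    have hne : S.Nonempty := ⟨j, by simp [hS, Finset.mem_filter, hj1, hj2, hvj]⟩
    set J := S.max' hne with hJ
    have hJmem : J ∈ S := S.max'_mem hne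
    simp only [hS, Finset.mem_filter, Finset.mem_Icc] at hJmem
    obtain ⟨⟨hJ1, hJ2⟩, hvJ⟩ := hJmem
    have hJn : J ≤ n := by
      rcases Nat.lt_or_ge J (n + 1) with h | h
      · omega
      · exfalso
        have h' : J = n + 1 := le_antisymm hJ2 h
        rw [h', hvn] at hvJ; exact one_ne_zero hvJ
    refine ⟨J + 1, Nat.le_add_left 1 J, Nat.succ_le_succ hJn, ?_, ?_⟩
    · intro i hi
      have hvi : v i = 0 := hback J hJ2 hvJ i (Nat.lt_succ_iff.mp hi)
      intro h
      exact hnd i (le_trans (Nat.lt_succ_iff.mp hi) hJ2) ⟨h, hvi⟩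
    · intro i hmi hin hvi
      have : i ∈ S := by simp [hS, Finset.mem_filter, Finset.mem_Icc,
        le_trans (Nat.le_add_left 1 J) hmi, hin, hvi]
      have := S.le_max' i this
      omega
end

section
/- Let Z be a finite collection of points distributed on components indexed by 0,...,r with multiplicities summing to n, and suppose its numerical support v(Z) equals v_b for some b ∈ B with b ≠ a. Then there exists s ∈ ℤ^n (explicitly constructible) such that ω(v(Z), s) < 0 and such that the limit condition s_{i-1} ≤ s_i holds for all i ∉ I_a. Specifically: (i) if a_{j+1} > b_{j+1} for some j, take s_i = 0 for i outside [a_j, a_{j+1}-1], s_{a_{j+1}-1} = d for d sufficiently large, s_{a_j} = 0, and s_k = s_{k-1} + 1 for a_j < k < a_{j+1}-1; then ω(v_b, s) < 0. -/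
lemma omegaV_zero (n r : ℕ) (a s v : ℕ → ℤ) (k : ℕ) (h : s k = 0) :
    omegaV n r a s v k = 0 := by
  simp [omegaV, omegaE, h]

lemma sum_split (r j : ℕ) (hj : j ≤ r + 1) (v f : ℕ → ℤ) (A B : ℤ)
    (hA : ∀ i, i < j → f i = A) (hB : ∀ i, j ≤ i → i < r + 1 → f i = B) :
    ∑ i ∈ Finset.range (r + 1), (v (i + 1) - v i) * f i
      = (v j - v 0) * A + (v (r + 1) - v j) * B := by
  rw [Finset.range_eq_Ico, ← Finset.sum_Ico_consecutive _ (Nat.zero_le j) hj]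
  have h1 : ∑ i ∈ Finset.Ico 0 j, (v (i + 1) - v i) * f i = (v j - v 0) * A := by
    rw [Finset.sum_congr rfl (fun i hi => by rw [hA i (Finset.mem_Ico.mp hi).2]),
      ← Finset.sum_mul, ← Finset.range_eq_Ico, Finset.sum_range_sub]
  have h2 : ∑ i ∈ Finset.Ico j (r + 1), (v (i + 1) - v i) * f i = (v (r + 1) - v j) * B := by
    rw [Finset.sum_congr rfl
        (fun i hi => by rw [hB i (Finset.mem_Ico.mp hi).1 (Finset.mem_Ico.mp hi).2]),
      ← Finset.sum_mul, Finset.sum_Ico_eq_sub _ hj, Finset.sum_range_sub, Finset.sum_range_sub]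
    ring
  rw [h1, h2]

/-- If the numerical support of `Z` equals `v_b` for some `b ∈ B` with `b ≠ a`, then
there exists a destabilizing `s ∈ ℤⁿ`: the limit condition `sᵢ₋₁ ≤ sᵢ` holds for all
`i ∉ I_a = {a₁,…,a_r}` (with `s₀ = s_{n+1} = 0`), and `ω(v_b, s) < 0`. -/
theorem stmt_18 (n r : ℕ) (hn : 1 ≤ n) (hr1 : 1 ≤ r) (hr2 : r ≤ n + 1)
    (a b : ℕ → ℤ)
    (ha0 : a 0 = 1) (haLast : a (r + 1) = (n : ℤ) + 1)
    (ha01 : a 0 ≤ a 1) (haStrict : ∀ i, 1 ≤ i → i < r → a i < a (i + 1))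
    (haEnd : a r ≤ a (r + 1))
    (hb0 : b 0 = 1) (hbLast : b (r + 1) = (n : ℤ) + 1)
    (hbMono : ∀ i, i ≤ r → b i ≤ b (i + 1))
    (hne : ∃ i, i ≤ r + 1 ∧ b i ≠ a i) :
    ∃ s : ℕ → ℤ, s 0 = 0 ∧ s (n + 1) = 0 ∧
      (∀ i, 1 ≤ i → i ≤ n + 1 → (∀ j, 1 ≤ j → j ≤ r → a j ≠ (i : ℤ)) →
        s (i - 1) ≤ s i) ∧
      ∑ k ∈ Finset.Icc 1 n, omegaV n r a s (fun i => b (i + 1) - b i) k < 0 := by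
  have haMono : ∀ i, i ≤ r → a i ≤ a (i + 1) := by
    intro i hi
    rcases Nat.eq_zero_or_pos i with h0' | h0'
    · subst h0'; exact ha01
    · rcases Nat.lt_or_ge i r with h | h
      · exact le_of_lt (haStrict i h0' h)
      · have : i = r := by omega
        subst this; exact haEnd
  have haLe : ∀ i', i' ≤ r + 1 → ∀ i, i ≤ i' → a i ≤ a i' := by
    intro i'
    induction i' with
    | zero => intro _ i hi; have : i = 0 := by omega
              rw [this]
    | succ k ih =>
      intro hk i hi
      rcases Nat.lt_or_ge i (k + 1) with h | h
      · exact le_trans (ih (by omega) i (by omega)) (haMono k (by omega))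
      · have : i = k + 1 := by omega
        rw [this]
  have hbLe : ∀ i', i' ≤ r + 1 → ∀ i, i ≤ i' → b i ≤ b i' := by
    intro i'
    induction i' with
    | zero => intro _ i hi; have : i = 0 := by omega
              rw [this]
    | succ k ih =>
      intro hk i hi
      rcases Nat.lt_or_ge i (k + 1) with h | h
      · exact le_trans (ih (by omega) i (by omega)) (hbMono k (by omega))
      · have : i = k + 1 := by omega
        rw [this]
  obtain ⟨i0, hi0le, hi0ne⟩ := hne
  have h00 : b 0 = a 0 := by rw [hb0, ha0]
  have hLL : b (r + 1) = a (r + 1) := by rw [hbLast, haLast]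
  have hne0 : i0 ≠ 0 := fun h => hi0ne (h ▸ h00)
  have hneL : i0 ≠ r + 1 := fun h => hi0ne (h ▸ hLL)
  obtain ⟨m, hm1, hmr, hmne⟩ : ∃ m, 1 ≤ m ∧ m ≤ r ∧ b m ≠ a m :=
    ⟨i0, by omega, by omega, hi0ne⟩
  rcases lt_or_gt_of_ne hmne with hlt | hgt
  · -- Case (i): b m < a m, spike +1 at K = a m - 1
    have hb1 : (1 : ℤ) ≤ b m := by
      have := hbLe m (by omega) 0 (by omega); omega
    have hamn : a m ≤ (n : ℤ) + 1 := by
      have := haLe (r + 1) le_rfl m (by omega); omega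
    have ham1 : a (m - 1) < a m := by
      rcases Nat.lt_or_ge m 2 with h | h
      · have hm1' : m = 1 := by omega
        subst hm1'
        have h0 : (1 : ℕ) - 1 = 0 := rfl
        rw [h0]; omega
      · have := haStrict (m - 1) (by omega) (by omega)
        have hmm : m - 1 + 1 = m := by omega
        rwa [hmm] at this
    set K : ℕ := (a m - 1).toNat with hKdef
    have hK : (K : ℤ) = a m - 1 := Int.toNat_of_nonneg (by omega)
    have hK1 : 1 ≤ K := by omega
    have hKn : K ≤ n := by omega
    refine ⟨fun k => if k = K then 1 else 0, ?_, ?_, ?_, ?_⟩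
    · simp only [if_neg (show (0 : ℕ) ≠ K by omega)]
    · simp only [if_neg (show n + 1 ≠ K by omega)]
    · intro i h1 h2 hja
      by_cases h3 : i - 1 = K
      · exact absurd (by omega : a m = (i : ℤ)) (hja m hm1 hmr)
      · simp only [if_neg h3]
        split <;> omega
    · set s : ℕ → ℤ := fun k => if k = K then 1 else 0 with hsdef
      have hsK : s K = 1 := if_pos rfl
      have hmem : K ∈ Finset.Icc 1 n := Finset.mem_Icc.mpr ⟨hK1, hKn⟩
      rw [Finset.sum_eq_single_of_mem K hmem
        (fun k _ hk => omegaV_zero n r a s _ k (if_neg hk))]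
      have hA : ∀ i, i < m → omegaE n a s i K = (n : ℤ) + 1 - K := by
        intro i hi
        have hai : a i ≤ a (m - 1) := haLe (m - 1) (by omega) i (by omega)
        simp only [omegaE, if_neg (show ¬((K : ℤ) < a i) by omega)]
        by_cases h : (K : ℤ) < a (i + 1)
        · rw [if_pos h, hsK, mul_one, mul_one,
            max_eq_left (by omega : -(K : ℤ) ≤ (n : ℤ) + 1 - K)]
        · rw [if_neg h, hsK, mul_one]
      have hB : ∀ i, m ≤ i → i < r + 1 → omegaE n a s i K = -(K : ℤ) := by
        intro i hmi hir
        have hai : a m ≤ a i := haLe i (by omega) m hmi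
        simp only [omegaE, if_pos (show (K : ℤ) < a i by omega)]
        rw [hsK, mul_one]
      have heq : omegaV n r a s (fun i => b (i + 1) - b i) K
          = (b m - b 0) * ((n : ℤ) + 1 - K) + (b (r + 1) - b m) * (-(K : ℤ)) := by
        rw [omegaV]
        exact sum_split r m (by omega) b _ _ _ hA hB
      rw [heq, hb0, hbLast]
      nlinarith [mul_le_mul_of_nonneg_right (show b m ≤ (K : ℤ) by omega)
        (show (0 : ℤ) ≤ (n : ℤ) + 1 by positivity)]
  · -- Case (ii): b m > a m, spike -1 at K = a m
    have ha1 : (1 : ℤ) ≤ a m := by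
      have := haLe m (by omega) 0 (by omega); omega
    have hbmn : b m ≤ (n : ℤ) + 1 := by
      have := hbLe (r + 1) le_rfl m (by omega); omega
    have ham1 : a m < a (m + 1) := by
      rcases Nat.lt_or_ge m r with h | h
      · exact haStrict m hm1 h
      · have : m = r := by omega
        subst this; omega
    have hamn : a (m + 1) ≤ (n : ℤ) + 1 := by
      have := haLe (r + 1) le_rfl (m + 1) (by omega); omega
    set K : ℕ := (a m).toNat with hKdef
    have hK : (K : ℤ) = a m := Int.toNat_of_nonneg (by omega)
    have hK1 : 1 ≤ K := by omega
    have hKn : K ≤ n := by omega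
    refine ⟨fun k => if k = K then -1 else 0, ?_, ?_, ?_, ?_⟩
    · simp only [if_neg (show (0 : ℕ) ≠ K by omega)]
    · simp only [if_neg (show n + 1 ≠ K by omega)]
    · intro i h1 h2 hja
      by_cases h3 : i = K
      · exact absurd (by omega : a m = (i : ℤ)) (hja m hm1 hmr)
      · simp only [if_neg h3]
        split <;> omega
    · set s : ℕ → ℤ := fun k => if k = K then -1 else 0 with hsdef
      have hsK : s K = -1 := if_pos rfl
      have hmem : K ∈ Finset.Icc 1 n := Finset.mem_Icc.mpr ⟨hK1, hKn⟩
      rw [Finset.sum_eq_single_of_mem K hmem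
        (fun k _ hk => omegaV_zero n r a s _ k (if_neg hk))]
      have hA : ∀ i, i < m → omegaE n a s i K = -((n : ℤ) + 1 - K) := by
        intro i hi
        have hai : a i ≤ a m := haLe m (by omega) i (by omega)
        have hai1 : a (i + 1) ≤ a m := haLe m (by omega) (i + 1) (by omega)
        simp only [omegaE, if_neg (show ¬((K : ℤ) < a i) by omega),
          if_neg (show ¬((K : ℤ) < a (i + 1)) by omega)]
        rw [hsK]; ring
      have hB : ∀ i, m ≤ i → i < r + 1 → omegaE n a s i K = (K : ℤ) := by
        intro i hmi hir
        by_cases him : (K : ℤ) < a i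
        · simp only [omegaE, if_pos him]
          rw [hsK]; ring
        · have hai1 : a (m + 1) ≤ a (i + 1) := haLe (i + 1) (by omega) (m + 1) (by omega)
          simp only [omegaE, if_neg him,
            if_pos (show (K : ℤ) < a (i + 1) by omega)]
          rw [hsK, show ((n : ℤ) + 1 - K) * (-1) = -((n : ℤ) + 1 - K) by ring,
            show -(K : ℤ) * (-1) = (K : ℤ) by ring,
            max_eq_right (by omega : -((n : ℤ) + 1 - K) ≤ (K : ℤ))]
      have heq : omegaV n r a s (fun i => b (i + 1) - b i) K
          = (b m - b 0) * (-((n : ℤ) + 1 - K)) + (b (r + 1) - b m) * (K : ℤ) := by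
        rw [omegaV]
        exact sum_split r m (by omega) b _ _ _ hA hB
      rw [heq, hb0, hbLast]
      nlinarith [mul_le_mul_of_nonneg_right (show (K : ℤ) ≤ b m - 1 by omega)
        (show (0 : ℤ) ≤ (n : ℤ) by positivity)]
end
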